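/- Exact linearized-subproblem decrease: under assumptions (A1)-(A3), for each node k define u_k(x_k, z̃, z_k, y_k) := g_k(z̃) + ⟨∇g_k(z̃), x_k − z̃⟩ + Σ_{j∈N_k} y_{kj}(x_{kj} − z_j) + Σ_{j∈N_k} (ρ_k/2)(x_{kj} − z_j)². Since x_k^{t+1} is the exact minimizer of u_k(·, z_k^{[t+1]_k}, z_k^{t+1}, y_k^t), it holds that u_k(x_k^{t+1}, z_k^{t+1}, z_k^{t+1}, y_k^t) − u_k(x_k^t, z_k^{t+1}, z_k^{t+1}, y_k^t) ≤ (L_k T_k/2) Σ_{d=0}^{T_k−1} Σ_{j∈N_k} ‖z_j^{t+1−d} − z_j^{t−d}‖² − ((ρ_k − L_k)/2) Σ_{j∈N_k} ‖x_{kj}^{t+1} − x_{kj}^t‖². -/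

import Mathlib

open Filter Topology RealInnerProductSpace

noncomputable section

/-- Zero-padded restriction of a vector of nodal variables to a neighborhood:
coordinates outside the neighborhood are set to zero. -/
def restr {K : ℕ} (Nk : Finset (Fin K)) (v : Fin K → ℝ) : EuclideanSpace ℝ (Fin K) :=
  WithLp.toLp 2 (fun j => if j ∈ Nk then v j else 0)

/-- The setting of the asynchronous proximal ADMM: network data, assumptions
(A1)-(A2), and the algorithmic update equations (i)-(iii) together with the
delay bounds and the update-frequency condition. -/
structure ProxADMM (K : ℕ) where
  /-- neighborhoods, `j ∈ Nb k` means `j ∈ N_k` -/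
  Nb : Fin K → Finset (Fin K)
  self_mem : ∀ k, k ∈ Nb k
  symm : ∀ k j, j ∈ Nb k ↔ k ∈ Nb j
  /-- local cost of node `k`, as a function of the zero-padded neighborhood variables -/
  g : Fin K → EuclideanSpace ℝ (Fin K) → ℝ
  g_local : ∀ k v w, (∀ j ∈ Nb k, v j = w j) → g k v = g k w
  /-- the Lipschitz constants of (A1) -/
  L : Fin K → ℝ
  L_pos : ∀ k, 0 < L k
  g_diff : ∀ k, Differentiable ℝ (g k)
  /-- (A1): the gradient of `g k` is `L k`-Lipschitz -/
  g_grad_lip : ∀ k v w, ‖gradient (g k) v - gradient (g k) w‖ ≤ L k * ‖v - w‖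
  /-- the convex nonsmooth part -/
  h : Fin K → ℝ → ℝ
  h_convex : ∀ k, ConvexOn ℝ Set.univ (h k)
  /-- the constraint sets -/
  Xs : Fin K → Set ℝ
  Xs_nonempty : ∀ k, (Xs k).Nonempty
  Xs_compact : ∀ k, IsCompact (Xs k)
  Xs_convex : ∀ k, Convex ℝ (Xs k)
  /-- (A2): `g k` is bounded below over the constraint set -/
  g_bddBelow : ∀ k, ∃ b, ∀ v : Fin K → ℝ, (∀ j, v j ∈ Xs j) → b ≤ g k (restr (Nb k) v)
  /-- penalty parameters -/
  ρ : Fin K → ℝ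
  ρ_pos : ∀ k, 0 < ρ k
  /-- update frequencies `f_k` -/
  freq : Fin K → ℝ
  freq_pos : ∀ k, 0 < freq k
  freq_le_one : ∀ k, freq k ≤ 1
  /-- maximum delays `T_k` -/
  Td : Fin K → ℕ
  /-- updating sets `S^t` -/
  Sset : ℕ → Finset (Fin K)
  /-- delayed index: `τ t k = [t+1]_k` -/
  τ : ℕ → Fin K → ℕ
  τ_le : ∀ t k, τ t k ≤ t + 1
  τ_ge : ∀ t k, t + 1 ≤ τ t k + Td k
  /-- iterates -/
  x : ℕ → Fin K → Fin K → ℝ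
  z : ℕ → Fin K → ℝ
  y : ℕ → Fin K → Fin K → ℝ
  z_init_mem : ∀ j, z 0 j ∈ Xs j
  /-- (i): feasibility of the `z`-update -/
  z_update_mem : ∀ t j, j ∈ Sset t → z (t + 1) j ∈ Xs j
  /-- (i): for `j ∈ S^t`, `z_j^{t+1}` minimizes the `j`-th block over `X_j` -/
  z_update_min : ∀ t j, j ∈ Sset t → IsMinOn
      (fun w => h j w + ∑ k ∈ Nb j, (y t k j * (x t k j - w) + ρ k / 2 * (x t k j - w) ^ 2))
      (Xs j) (z (t + 1) j)
  /-- (i): non-updating nodes keep their old value -/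
  z_noupdate : ∀ t j, j ∉ Sset t → z (t + 1) j = z t j
  /-- (ii): proximal (linearized) `x`-update with delayed gradient -/
  x_update : ∀ t k, ∀ j ∈ Nb k,
      x (t + 1) k j = z (t + 1) j
        - (1 / ρ k) * (gradient (g k) (restr (Nb k) (z (τ t k))) j + y t k j)
  /-- (iii): dual update -/
  y_update : ∀ t k, ∀ j ∈ Nb k,
      y (t + 1) k j = y t k j + ρ k * (x (t + 1) k j - z (t + 1) j)
  /-- in any window of `T` consecutive iterations node `k` updates at least `f_k T` times -/
  update_freq : ∀ k (t₀ T : ℕ),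
      freq k * T ≤ ((Finset.Ico t₀ (t₀ + T)).filter (fun t => k ∈ Sset t)).card

/-- The augmented Lagrangian. -/
def ProxADMM.Lag {K : ℕ} (P : ProxADMM K) (xx : Fin K → Fin K → ℝ) (zz : Fin K → ℝ)
    (yy : Fin K → Fin K → ℝ) : ℝ :=
  ∑ k, (P.g k (restr (P.Nb k) (xx k)) + P.h k (zz k)
    + ∑ j ∈ P.Nb k, (yy k j * (xx k j - zz j) + P.ρ k / 2 * (xx k j - zz j) ^ 2))

end

/-- The linearized local objective
`u_k(x_k, z̃, z_k, y_k) = g_k(z̃) + ⟨∇g_k(z̃), x_k − z̃⟩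
  + Σ_{j∈N_k} y_{kj}(x_{kj} − z_j) + Σ_{j∈N_k} (ρ_k/2)(x_{kj} − z_j)²`,
where `z̃` is the (zero-padded) linearization point. -/
noncomputable def ProxADMM.u {K : ℕ} (P : ProxADMM K) (k : Fin K) (xx : Fin K → ℝ)
    (zt : EuclideanSpace ℝ (Fin K)) (zz : Fin K → ℝ) (yy : Fin K → ℝ) : ℝ :=
  P.g k zt + ⟪gradient (P.g k) zt, restr (P.Nb k) xx - zt⟫
    + ∑ j ∈ P.Nb k, (yy j * (xx j - zz j) + P.ρ k / 2 * (xx j - zz j) ^ 2)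

/-!
The `x`-update is the exact minimizer of the subproblem linearized at the delayed point
`z^{[t+1]_k}`, so coordinatewise `∇g_k(z^{[t+1]_k}) + y^t = ρ_k (z^{t+1} - x^{t+1})`. Hence the
change of `u_k(·, z^{t+1}, z^{t+1}, y^t)` from `x^t` to `x^{t+1}` equals
`-(ρ_k/2)‖x^{t+1} - x^t‖²` plus the gradient mismatch `∇g_k(z^{t+1}) - ∇g_k(z^{[t+1]_k})`
paired with `x^{t+1} - x^t`. Young's inequality with weight `L_k` splits the pairing, the
Lipschitz gradient bounds the mismatch by `L_k ‖z^{t+1} - z^{[t+1]_k}‖`, and writing this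
difference as a telescoping sum of at most `T_k` increments and applying Cauchy–Schwarz gives
the `T_k`-fold sum of squared increments.
-/

open Finset

lemma inner_restr {K : ℕ} (Nk : Finset (Fin K)) (G : EuclideanSpace ℝ (Fin K)) (v : Fin K → ℝ) :
    ⟪G, restr Nk v⟫ = ∑ j ∈ Nk, G j * v j := by
  simp only [PiLp.inner_apply, RCLike.inner_apply, conj_trivial, restr, ite_mul, zero_mul,
    sum_ite_mem, univ_inter, mul_comm]

lemma norm_restr_sub_restr_sq {K : ℕ} (Nk : Finset (Fin K)) (v w : Fin K → ℝ) :
    ‖restr Nk v - restr Nk w‖ ^ 2 = ∑ j ∈ Nk, (v j - w j) ^ 2 := by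
  calc _ = ∑ j, if j ∈ Nk then (v j - w j) ^ 2 else 0 := by
        rw [EuclideanSpace.real_norm_sq_eq]
        exact sum_congr rfl fun j _ => by by_cases hj : j ∈ Nk <;> simp [restr, hj]
    _ = _ := by rw [sum_ite_mem, univ_inter]

lemma EuclideanSpace.sum_sq_le_norm_sq {ι : Type*} [Fintype ι] (s : Finset ι)
    (v : EuclideanSpace ℝ ι) : ∑ j ∈ s, v j ^ 2 ≤ ‖v‖ ^ 2 := by
  rw [EuclideanSpace.real_norm_sq_eq]
  exact sum_le_sum_of_subset_of_nonneg (subset_univ s) fun _ _ _ => sq_nonneg _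

lemma sq_sub_delayed_le (f : ℕ → ℝ) {t s T : ℕ} (hs : s ≤ t + 1) (hT : t + 1 ≤ s + T) :
    (f (t + 1) - f s) ^ 2 ≤ T * ∑ d ∈ range T, (f (t + 1 - d) - f (t - d)) ^ 2 := by
  have htel : f (t + 1) - f s = ∑ d ∈ range (t + 1 - s), (f (t + 1 - d) - f (t - d)) := by
    have := sum_range_sub' (fun d => f (t + 1 - d)) (t + 1 - s)
    simp only [Nat.add_sub_add_right, Nat.sub_zero, Nat.sub_sub_self hs] at this
    exact this.symm
  calc (f (t + 1) - f s) ^ 2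
      ≤ ((t + 1 - s : ℕ) : ℝ) * ∑ d ∈ range (t + 1 - s), (f (t + 1 - d) - f (t - d)) ^ 2 := by
        have := sq_sum_le_card_mul_sum_sq (s := range (t + 1 - s))
          (f := fun d => f (t + 1 - d) - f (t - d))
        rwa [card_range, ← htel] at this
    _ ≤ T * ∑ d ∈ range T, (f (t + 1 - d) - f (t - d)) ^ 2 := by
        have hm : t + 1 - s ≤ T := by omega
        gcongr

lemma linearized_step_decrease {G Gh a b z y ρ L : ℝ} (hL : 0 < L)
    (hopt : Gh + y = ρ * (z - a)) :
    G * a + (y * (a - z) + ρ / 2 * (a - z) ^ 2) - (G * b + (y * (b - z) + ρ / 2 * (b - z) ^ 2))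
      ≤ (G - Gh) ^ 2 / (2 * L) - (ρ - L) / 2 * (a - b) ^ 2 := by
  have hsq : 0 ≤ (G - Gh - L * (a - b)) ^ 2 / (2 * L) := by positivity
  have hyoung : (G - Gh) * (a - b) = (G - Gh) ^ 2 / (2 * L) + L / 2 * (a - b) ^ 2
      - (G - Gh - L * (a - b)) ^ 2 / (2 * L) := by
    field_simp
    ring
  linear_combination (a - b) * hopt + hyoung + hsq

namespace ProxADMM

variable {K : ℕ} (P : ProxADMM K)

lemma u_sub_u_eq_sum (k : Fin K) (a b : Fin K → ℝ) (zt : EuclideanSpace ℝ (Fin K))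
    (zz yy : Fin K → ℝ) :
    P.u k a zt zz yy - P.u k b zt zz yy
      = ∑ j ∈ P.Nb k, (gradient (P.g k) zt j * a j
          + (yy j * (a j - zz j) + P.ρ k / 2 * (a j - zz j) ^ 2)
        - (gradient (P.g k) zt j * b j
          + (yy j * (b j - zz j) + P.ρ k / 2 * (b j - zz j) ^ 2))) := by
  simp only [u, inner_sub_right, inner_restr, sum_sub_distrib, sum_add_distrib]
  ring

lemma x_update_optimality (t : ℕ) (k : Fin K) {j : Fin K} (hj : j ∈ P.Nb k) :
    gradient (P.g k) (restr (P.Nb k) (P.z (P.τ t k))) j + P.y t k j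
      = P.ρ k * (P.z (t + 1) j - P.x (t + 1) k j) := by
  rw [P.x_update t k j hj]
  field_simp [(P.ρ_pos k).ne']
  ring

lemma sum_sq_z_sub_delayed_le (t : ℕ) (k : Fin K) :
    ∑ j ∈ P.Nb k, (P.z (t + 1) j - P.z (P.τ t k) j) ^ 2
      ≤ P.Td k * ∑ d ∈ range (P.Td k), ∑ j ∈ P.Nb k, (P.z (t + 1 - d) j - P.z (t - d) j) ^ 2 := by
  rw [sum_comm, mul_sum]
  exact sum_le_sum fun j _ =>
    sq_sub_delayed_le (fun s => P.z s j) (P.τ_le t k) (P.τ_ge t k)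

lemma sum_sq_grad_sub_delayed_le (t : ℕ) (k : Fin K) :
    ∑ j ∈ P.Nb k, (gradient (P.g k) (restr (P.Nb k) (P.z (t + 1))) j
        - gradient (P.g k) (restr (P.Nb k) (P.z (P.τ t k))) j) ^ 2
      ≤ P.L k ^ 2 * (P.Td k
          * ∑ d ∈ range (P.Td k), ∑ j ∈ P.Nb k, (P.z (t + 1 - d) j - P.z (t - d) j) ^ 2) := by
  set zc := restr (P.Nb k) (P.z (t + 1))
  set zd := restr (P.Nb k) (P.z (P.τ t k))
  calc _ ≤ ‖gradient (P.g k) zc - gradient (P.g k) zd‖ ^ 2 :=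
        EuclideanSpace.sum_sq_le_norm_sq _ (gradient (P.g k) zc - gradient (P.g k) zd)
    _ ≤ (P.L k * ‖zc - zd‖) ^ 2 := by gcongr; exact P.g_grad_lip k zc zd
    _ = P.L k ^ 2 * ∑ j ∈ P.Nb k, (P.z (t + 1) j - P.z (P.τ t k) j) ^ 2 := by
        rw [mul_pow, norm_restr_sub_restr_sq]
    _ ≤ _ := by gcongr; exact P.sum_sq_z_sub_delayed_le t k

end ProxADMM

theorem prox_admm_linearized_decrease_general {K : ℕ} (P : ProxADMM K)
    (t : ℕ) (k : Fin K) :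
    P.u k (P.x (t + 1) k) (restr (P.Nb k) (P.z (t + 1))) (P.z (t + 1)) (P.y t k)
      - P.u k (P.x t k) (restr (P.Nb k) (P.z (t + 1))) (P.z (t + 1)) (P.y t k)
    ≤ P.L k * (P.Td k : ℝ) / 2 *
        ∑ d ∈ Finset.range (P.Td k), ∑ j ∈ P.Nb k,
          ‖P.z (t + 1 - d) j - P.z (t - d) j‖ ^ 2
      - (P.ρ k - P.L k) / 2 * ∑ j ∈ P.Nb k, ‖P.x (t + 1) k j - P.x t k j‖ ^ 2 := by
  have hL := P.L_pos k
  have hgrad := P.sum_sq_grad_sub_delayed_le t k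
  simp only [Real.norm_eq_abs, sq_abs]
  rw [P.u_sub_u_eq_sum]
  calc _ ≤ ∑ j ∈ P.Nb k, ((gradient (P.g k) (restr (P.Nb k) (P.z (t + 1))) j
          - gradient (P.g k) (restr (P.Nb k) (P.z (P.τ t k))) j) ^ 2 / (2 * P.L k)
        - (P.ρ k - P.L k) / 2 * (P.x (t + 1) k j - P.x t k j) ^ 2) :=
        sum_le_sum fun j hj => linearized_step_decrease hL (P.x_update_optimality t k hj)
    _ ≤ _ := by
        rw [sum_sub_distrib, ← sum_div, ← mul_sum]
        gcongr ?_ - _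
        rw [div_le_iff₀ (by positivity)]
        exact hgrad.trans_eq (by ring)

/-- Exact linearized-subproblem decrease (asynchronous proximal ADMM,
assumptions (A1)-(A3)): since `x_k^{t+1}` exactly minimizes
`u_k(·, z_k^{[t+1]_k}, z_k^{t+1}, y_k^t)`, the decrease of
`u_k(·, z_k^{t+1}, z_k^{t+1}, y_k^t)` from `x_k^t` to `x_k^{t+1}` is as stated. -/
theorem prox_admm_linearized_decrease {K : ℕ} (P : ProxADMM K)
    (α β : Fin K → ℝ)
    (hα : ∀ k, α k = P.ρ k * P.freq k / 2
      - (7 * P.L k / (2 * P.ρ k ^ 2) + 1 / P.ρ k) * ((P.Nb k).card : ℝ) * P.L k ^ 2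
          * ((P.Td k : ℝ) + 1) ^ 2
      - ((P.Nb k).card : ℝ) * P.L k * (P.Td k : ℝ) ^ 2 / 2)
    (hβ : ∀ k, β k = P.ρ k - 7 * P.L k)
    (hA3 : ∀ k, 0 < α k ∧ 0 < β k)
    (t : ℕ) (k : Fin K) :
    P.u k (P.x (t + 1) k) (restr (P.Nb k) (P.z (t + 1))) (P.z (t + 1)) (P.y t k)
      - P.u k (P.x t k) (restr (P.Nb k) (P.z (t + 1))) (P.z (t + 1)) (P.y t k)
    ≤ P.L k * (P.Td k : ℝ) / 2 *
        ∑ d ∈ Finset.range (P.Td k), ∑ j ∈ P.Nb k,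
          ‖P.z (t + 1 - d) j - P.z (t - d) j‖ ^ 2
      - (P.ρ k - P.L k) / 2 * ∑ j ∈ P.Nb k, ‖P.x (t + 1) k j - P.x t k j‖ ^ 2 :=
  prox_admm_linearized_decrease_general P t k
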